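/- arXiv:2012.01089 — 2 statements merged into one kernel-verified Lean document; each statement's English description precedes it below -/
import Mathlib

section
/- Let s > 0, K_x ≥ 0, let P be a real d×d matrix, and let x ∈ B_s^d with x ≠ 0, Px ≠ 0 and d_s(0, x) ≤ K_x. Then ‖P^{⊗_s} x‖ ≤ s·tanh(‖P‖_F · K_x / (2s)). -/
open Real MeasureTheory

/-- Inverse hyperbolic tangent on `(-1, 1)`. -/
noncomputable def Real.artanhLog (x : ℝ) : ℝ := (1 / 2) * Real.log ((1 + x) / (1 - x))

/-- Matrix-vector multiplication viewed as a map between Euclidean spaces. -/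
noncomputable def mulVecE {d d' : ℕ} (P : Matrix (Fin d') (Fin d) ℝ)
    (x : EuclideanSpace ℝ (Fin d)) : EuclideanSpace ℝ (Fin d') :=
  (EuclideanSpace.equiv (Fin d') ℝ).symm (P.mulVec (EuclideanSpace.equiv (Fin d) ℝ x))

/-- Möbius matrix multiplication `P^{⊗_s} x` on the Poincaré ball of radius `s`.
When `P.mulVec x = 0` this evaluates to `0`, as required. -/
noncomputable def mobiusMat {d d' : ℕ} (s : ℝ) (P : Matrix (Fin d') (Fin d) ℝ)
    (x : EuclideanSpace ℝ (Fin d)) : EuclideanSpace ℝ (Fin d') :=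
  (s * Real.tanh ((‖mulVecE P x‖ / ‖x‖) * Real.artanhLog (‖x‖ / s)) / ‖mulVecE P x‖) • mulVecE P x

/-- Frobenius norm of a real matrix. -/
noncomputable def frobNorm {m n : ℕ} (P : Matrix (Fin m) (Fin n) ℝ) : ℝ :=
  Real.sqrt (∑ i, ∑ j, (P i j) ^ 2)

/-- Lorentz gamma factor `γ_x = 1/√(1 - ‖x‖²/s²)`. -/
noncomputable def lorentzGamma {d : ℕ} (s : ℝ) (x : EuclideanSpace ℝ (Fin d)) : ℝ :=
  1 / Real.sqrt (1 - ‖x‖ ^ 2 / s ^ 2)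

/-- Poincaré distance `d_s(x,y) = 2s·arsinh(γ_x γ_y ‖x - y‖ / s)`. -/
noncomputable def dPoin {d : ℕ} (s : ℝ) (x y : EuclideanSpace ℝ (Fin d)) : ℝ :=
  2 * s * Real.arsinh (lorentzGamma s x * lorentzGamma s y * ‖x - y‖ / s)

/-- Möbius addition on the Poincaré ball of radius `s`. -/
noncomputable def mobiusAdd {d : ℕ} (s : ℝ) (x y : EuclideanSpace ℝ (Fin d)) :
    EuclideanSpace ℝ (Fin d) :=
  ((1 + 2 / s ^ 2 * (inner ℝ x y : ℝ) + 1 / s ^ 2 * ‖y‖ ^ 2) /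
      (1 + 2 / s ^ 2 * (inner ℝ x y : ℝ) + 1 / s ^ 4 * ‖x‖ ^ 2 * ‖y‖ ^ 2)) • x +
    ((1 - 1 / s ^ 2 * ‖x‖ ^ 2) /
      (1 + 2 / s ^ 2 * (inner ℝ x y : ℝ) + 1 / s ^ 4 * ‖x‖ ^ 2 * ‖y‖ ^ 2)) • y

/-- Exponential map at the origin of the Poincaré ball of radius `s`. -/
noncomputable def expZero {d : ℕ} (s : ℝ) (v : EuclideanSpace ℝ (Fin d)) :
    EuclideanSpace ℝ (Fin d) :=
  (s * Real.tanh (‖v‖ / s) / ‖v‖) • v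

/-- Logarithmic map at the origin of the Poincaré ball of radius `s`. -/
noncomputable def logZero {d : ℕ} (s : ℝ) (y : EuclideanSpace ℝ (Fin d)) :
    EuclideanSpace ℝ (Fin d) :=
  (s * Real.artanhLog (‖y‖ / s) / ‖y‖) • y

/-!
`P^{⊗_s} x` has norm at most `s·tanh((‖Px‖/‖x‖)·artanh(‖x‖/s))`. The ratio `‖Px‖/‖x‖` is at most `‖P‖_F`
(submultiplicativity of the Frobenius norm, applied to `x` as a one-column matrix), `artanh(‖x‖/s)`
is `d_s(0, x)/(2s) ≤ K_x/(2s)`, and `tanh` is monotone.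
-/

namespace Real

@[gcongr]
theorem tanh_le_tanh {a b : ℝ} (h : a ≤ b) : tanh a ≤ tanh b := by
  rwa [← artanh_le_artanh_iff ⟨neg_one_lt_tanh a, tanh_lt_one a⟩ ⟨neg_one_lt_tanh b, tanh_lt_one b⟩,
    artanh_tanh, artanh_tanh]

theorem tanh_nonneg {a : ℝ} (h : 0 ≤ a) : 0 ≤ tanh a := by
  simpa only [tanh_zero] using tanh_le_tanh h

theorem artanhLog_nonneg {r : ℝ} (h₀ : 0 ≤ r) (h₁ : r ≤ 1) : 0 ≤ artanhLog r := by
  rw [artanhLog, ← artanh_eq_half_log ⟨by linarith, h₁⟩]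
  exact artanh_nonneg h₀

end Real

theorem norm_div_norm_smul_le {E : Type*} [NormedAddCommGroup E] [NormedSpace ℝ E] (a : ℝ) (v : E) :
    ‖(a / ‖v‖) • v‖ ≤ |a| := by
  rcases eq_or_ne v 0 with rfl | hv
  · simp
  · rw [norm_smul, norm_div, norm_norm, div_mul_cancel₀ _ (norm_ne_zero_iff.2 hv), Real.norm_eq_abs]

section Frobenius

open Matrix
open scoped Matrix.Norms.Frobenius

theorem frobNorm_eq_norm {m n : ℕ} (P : Matrix (Fin m) (Fin n) ℝ) : frobNorm P = ‖P‖ := by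
  rw [frobenius_norm_def, frobNorm, Real.sqrt_eq_rpow]
  simp

theorem norm_mulVecE_le_frobNorm_mul {d d' : ℕ} (P : Matrix (Fin d') (Fin d) ℝ)
    (x : EuclideanSpace ℝ (Fin d)) : ‖mulVecE P x‖ ≤ frobNorm P * ‖x‖ :=
  calc ‖mulVecE P x‖ = ‖replicateCol (Fin 1) (P *ᵥ x.ofLp)‖ := (frobenius_norm_replicateCol _).symm
    _ = ‖P * replicateCol (Fin 1) x.ofLp‖ := by rw [replicateCol_mulVec]
    _ ≤ ‖P‖ * ‖replicateCol (Fin 1) x.ofLp‖ := frobenius_norm_mul _ _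
    _ = frobNorm P * ‖x‖ := by
      rw [frobNorm_eq_norm]
      exact congrArg _ (frobenius_norm_replicateCol _)

end Frobenius

theorem norm_mobiusMat_le {d d' : ℕ} {s : ℝ} (hs : 0 < s) (P : Matrix (Fin d') (Fin d) ℝ)
    {x : EuclideanSpace ℝ (Fin d)} (hx : ‖x‖ < s) :
    ‖mobiusMat s P x‖ ≤ s * Real.tanh (frobNorm P * Real.artanhLog (‖x‖ / s)) := by
  have hA : 0 ≤ Real.artanhLog (‖x‖ / s) :=
    Real.artanhLog_nonneg (by positivity) ((div_le_one hs).2 hx.le)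
  have hratio : ‖mulVecE P x‖ / ‖x‖ ≤ frobNorm P :=
    div_le_of_le_mul₀ (norm_nonneg x) (Real.sqrt_nonneg _) (norm_mulVecE_le_frobNorm_mul P x)
  calc ‖mobiusMat s P x‖
      ≤ |s * Real.tanh (‖mulVecE P x‖ / ‖x‖ * Real.artanhLog (‖x‖ / s))| :=
        norm_div_norm_smul_le _ _
    _ = s * Real.tanh (‖mulVecE P x‖ / ‖x‖ * Real.artanhLog (‖x‖ / s)) :=
        abs_of_nonneg (mul_nonneg hs.le (Real.tanh_nonneg (by positivity)))
    _ ≤ s * Real.tanh (frobNorm P * Real.artanhLog (‖x‖ / s)) := by gcongr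

theorem stmt6_general {d : ℕ} (s Kx : ℝ) (hs : 0 < s)
    (P : Matrix (Fin d) (Fin d) ℝ) (x : EuclideanSpace ℝ (Fin d))
    (hxball : ‖x‖ < s)
    (hdx : 2 * s * Real.artanhLog (‖x‖ / s) ≤ Kx) :
    ‖mobiusMat s P x‖ ≤ s * Real.tanh (frobNorm P * Kx / (2 * s)) := by
  have hdist : Real.artanhLog (‖x‖ / s) ≤ Kx / (2 * s) := by
    rw [le_div_iff₀ (by positivity)]
    linarith
  calc ‖mobiusMat s P x‖ ≤ s * Real.tanh (frobNorm P * Real.artanhLog (‖x‖ / s)) :=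
        norm_mobiusMat_le hs P hxball
    _ ≤ s * Real.tanh (frobNorm P * (Kx / (2 * s))) := by
        gcongr
        exact Real.sqrt_nonneg _
    _ = s * Real.tanh (frobNorm P * Kx / (2 * s)) := by rw [mul_div_assoc]

/-- Upper bound on the norm of the Möbius matrix multiplication. -/
theorem stmt6 {d : ℕ} (s Kx : ℝ) (hs : 0 < s) (hKx : 0 ≤ Kx)
    (P : Matrix (Fin d) (Fin d) ℝ) (x : EuclideanSpace ℝ (Fin d))
    (hx0 : x ≠ 0) (hxball : ‖x‖ < s) (hPx : mulVecE P x ≠ 0)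
    (hdx : 2 * s * Real.artanhLog (‖x‖ / s) ≤ Kx) :
    ‖mobiusMat s P x‖ ≤ s * Real.tanh (frobNorm P * Kx / (2 * s)) :=
  stmt6_general s Kx hs P x hxball hdx
end

section
/- Let s > 0, C_x > 0, L > 0, let P and Q be real d×d matrices, and let x ∈ ℝ^d with 0 < ‖x‖ ≤ C_x and ‖x‖ < s, Px ≠ 0, Qx ≠ 0, 1/‖Px‖ ≤ L and 1/‖Qx‖ ≤ L. Then ‖P^{⊗_s} x − Q^{⊗_s} x‖ ≤ 2sL·C_x·‖P − Q‖_F. -/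
open Real MeasureTheory

/-!
With `c = artanh (‖x‖ / s) / ‖x‖`, `P^{⊗_s} x = s tanh (c ‖u‖) u / ‖u‖` for `u = P x`. The
difference of two such vectors splits into a change of direction, bounded through
`‖u‖ ‖v‖ ‖u/‖u‖ - v/‖v‖‖² = ‖u - v‖² - (‖u‖ - ‖v‖)²`, and a change of length, bounded by the
mean value theorem since `(tanh (c t))' = c / cosh² (c t) ≤ L` once `t ≥ 1/L`. Each is at most
`s L ‖P x - Q x‖ ≤ s L ‖P - Q‖_F ‖x‖`.
-/

namespace Real

theorem hasDerivAt_tanh (x : ℝ) : HasDerivAt tanh (1 / cosh x ^ 2) x := by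
  have h := (hasDerivAt_sinh x).div (hasDerivAt_cosh x) (cosh_pos x).ne'
  rw [show sinh / cosh = tanh from funext fun y => (tanh_eq_sinh_div_cosh y).symm] at h
  rwa [← sq, ← sq, cosh_sq_sub_sinh_sq] at h

theorem lt_cosh_of_nonneg {t : ℝ} (ht : 0 ≤ t) : t < cosh t :=
  (self_le_sinh_iff.2 ht).trans_lt (sinh_lt_cosh t)

theorem abs_tanh_mul_sub_tanh_mul_le {c L a b : ℝ} (hc : 0 ≤ c) (hL : 0 < L)
    (ha : L⁻¹ ≤ a) (hb : L⁻¹ ≤ b) : |tanh (c * a) - tanh (c * b)| ≤ L * |a - b| := by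
  have hderiv : ∀ t ∈ Set.Ici L⁻¹, HasDerivWithinAt (fun t => tanh (c * t))
      (1 / cosh (c * t) ^ 2 * c) (Set.Ici L⁻¹) t := fun t _ =>
    ((hasDerivAt_tanh (c * t)).comp t (hasDerivAt_const_mul c)).hasDerivWithinAt
  have hbound : ∀ t ∈ Set.Ici L⁻¹, ‖1 / cosh (c * t) ^ 2 * c‖ ≤ L := by
    intro t (ht : L⁻¹ ≤ t)
    have hLt : 1 ≤ L * t := (inv_le_iff_one_le_mul₀' hL).1 ht
    have hct : 0 ≤ c * t := mul_nonneg hc ((inv_pos.2 hL).le.trans ht)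
    have hc_le : c ≤ L * cosh (c * t) ^ 2 := calc
      c ≤ L * (c * t) := by nlinarith
      _ ≤ L * cosh (c * t) := by gcongr; exact (lt_cosh_of_nonneg hct).le
      _ ≤ L * cosh (c * t) ^ 2 := by gcongr; nlinarith [one_le_cosh (c * t)]
    rw [Real.norm_eq_abs, abs_of_nonneg (by positivity), one_div_mul_eq_div,
      div_le_iff₀ (by positivity)]
    exact hc_le
  simpa only [Real.norm_eq_abs] using
    (convex_Ici L⁻¹).norm_image_sub_le_of_norm_hasDerivWithin_le hderiv hbound hb ha

theorem artanhLog_nonneg_s7 {x : ℝ} (h0 : 0 ≤ x) (h1 : x < 1) : 0 ≤ artanhLog x :=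
  mul_nonneg (by norm_num) (log_nonneg ((one_le_div (by linarith)).2 (by linarith)))

end Real

section InnerProductSpace

variable {E : Type*} [NormedAddCommGroup E] [InnerProductSpace ℝ E]

theorem norm_mul_norm_mul_norm_inv_smul_sub_sq {u v : E} (hu : u ≠ 0) (hv : v ≠ 0) :
    ‖u‖ * ‖v‖ * ‖‖u‖⁻¹ • u - ‖v‖⁻¹ • v‖ ^ 2 = ‖u - v‖ ^ 2 - (‖u‖ - ‖v‖) ^ 2 := by
  have hu' : ‖u‖ ≠ 0 := norm_ne_zero_iff.2 hu
  have hv' : ‖v‖ ≠ 0 := norm_ne_zero_iff.2 hv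
  have hu1 : ‖‖u‖⁻¹ • u‖ = 1 := norm_smul_inv_norm (𝕜 := ℝ) hu
  have hv1 : ‖‖v‖⁻¹ • v‖ = 1 := norm_smul_inv_norm (𝕜 := ℝ) hv
  rw [norm_sub_sq_real, norm_sub_sq_real, real_inner_smul_left, real_inner_smul_right, hu1, hv1]
  field_simp
  ring

theorem norm_inv_norm_smul_sub_le {u v : E} (hu : u ≠ 0) (hv : v ≠ 0) {L : ℝ}
    (huL : 1 / ‖u‖ ≤ L) (hvL : 1 / ‖v‖ ≤ L) :
    ‖‖u‖⁻¹ • u - ‖v‖⁻¹ • v‖ ≤ L * ‖u - v‖ := by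
  have hu0 : 0 < ‖u‖ := norm_pos_iff.2 hu
  have hv0 : 0 < ‖v‖ := norm_pos_iff.2 hv
  have hL : 0 ≤ L := (one_div_pos.2 hu0).le.trans huL
  have huL' : 1 ≤ L * ‖u‖ := by rwa [div_le_iff₀ hu0] at huL
  have hvL' : 1 ≤ L * ‖v‖ := by rwa [div_le_iff₀ hv0] at hvL
  have hid := norm_mul_norm_mul_norm_inv_smul_sub_sq hu hv
  rw [← pow_le_pow_iff_left₀ (norm_nonneg _) (by positivity) two_ne_zero]
  calc ‖‖u‖⁻¹ • u - ‖v‖⁻¹ • v‖ ^ 2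
      ≤ (L * ‖u‖) * (L * ‖v‖) * ‖‖u‖⁻¹ • u - ‖v‖⁻¹ • v‖ ^ 2 := by
        refine le_mul_of_one_le_left (by positivity) ?_
        nlinarith
    _ = L ^ 2 * (‖u - v‖ ^ 2 - (‖u‖ - ‖v‖) ^ 2) := by rw [← hid]; ring
    _ ≤ (L * ‖u - v‖) ^ 2 := by nlinarith [sq_nonneg (‖u‖ - ‖v‖), sq_nonneg L]

theorem norm_tanh_smul_sub_tanh_smul_le {s c L : ℝ} (hs : 0 ≤ s) (hc : 0 ≤ c) {u v : E}
    (hu : u ≠ 0) (hv : v ≠ 0) (huL : 1 / ‖u‖ ≤ L) (hvL : 1 / ‖v‖ ≤ L) :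
    ‖(s * tanh (c * ‖u‖) / ‖u‖) • u - (s * tanh (c * ‖v‖) / ‖v‖) • v‖ ≤
      2 * s * L * ‖u - v‖ := by
  have hu0 : 0 < ‖u‖ := norm_pos_iff.2 hu
  have hv0 : 0 < ‖v‖ := norm_pos_iff.2 hv
  have hL : 0 < L := (one_div_pos.2 hu0).trans_le huL
  set T₁ := tanh (c * ‖u‖)
  set T₂ := tanh (c * ‖v‖)
  have hdirection : ‖‖u‖⁻¹ • u - ‖v‖⁻¹ • v‖ ≤ L * ‖u - v‖ :=
    norm_inv_norm_smul_sub_le hu hv huL hvL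
  have hlength : |T₁ - T₂| ≤ L * ‖u - v‖ := calc
    |T₁ - T₂| ≤ L * |‖u‖ - ‖v‖| := abs_tanh_mul_sub_tanh_mul_le hc hL
        (inv_le_of_inv_le₀ hu0 (by rwa [← one_div])) (inv_le_of_inv_le₀ hv0 (by rwa [← one_div]))
    _ ≤ L * ‖u - v‖ := by gcongr; exact abs_norm_sub_norm_le u v
  have hsplit : (s * T₁ / ‖u‖) • u - (s * T₂ / ‖v‖) • v =
      s • (T₁ • (‖u‖⁻¹ • u - ‖v‖⁻¹ • v) + (T₁ - T₂) • ‖v‖⁻¹ • v) := by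
    simp only [div_eq_mul_inv, mul_smul]
    module
  rw [hsplit, norm_smul, Real.norm_of_nonneg hs]
  calc s * ‖T₁ • (‖u‖⁻¹ • u - ‖v‖⁻¹ • v) + (T₁ - T₂) • ‖v‖⁻¹ • v‖
      ≤ s * (|T₁| * ‖‖u‖⁻¹ • u - ‖v‖⁻¹ • v‖ + |T₁ - T₂| * 1) := by
        gcongr
        refine (norm_add_le _ _).trans_eq ?_
        have hv1 : ‖‖v‖⁻¹ • v‖ = 1 := norm_smul_inv_norm (𝕜 := ℝ) hv
        rw [norm_smul, norm_smul, hv1, Real.norm_eq_abs, Real.norm_eq_abs]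
    _ ≤ s * (1 * (L * ‖u - v‖) + L * ‖u - v‖ * 1) := by
        gcongr
        exact (abs_tanh_lt_one _).le
    _ = 2 * s * L * ‖u - v‖ := by ring

end InnerProductSpace

section Matrix

variable {d d' : ℕ}

theorem mulVecE_apply (P : Matrix (Fin d') (Fin d) ℝ) (x : EuclideanSpace ℝ (Fin d))
    (i : Fin d') :
    mulVecE P x i = ∑ j, P i j * x j := by
  simp [mulVecE, Matrix.mulVec, dotProduct]

theorem mulVecE_sub (P Q : Matrix (Fin d') (Fin d) ℝ) (x : EuclideanSpace ℝ (Fin d)) :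
    mulVecE (P - Q) x = mulVecE P x - mulVecE Q x := by
  simp [mulVecE, Matrix.sub_mulVec]

theorem norm_mulVecE_le (P : Matrix (Fin d') (Fin d) ℝ) (x : EuclideanSpace ℝ (Fin d)) :
    ‖mulVecE P x‖ ≤ frobNorm P * ‖x‖ := by
  rw [EuclideanSpace.norm_eq, EuclideanSpace.norm_eq, frobNorm, ← Real.sqrt_mul (by positivity)]
  refine Real.sqrt_le_sqrt ?_
  simp only [mulVecE_apply, Real.norm_eq_abs, sq_abs]
  rw [Finset.sum_mul]
  exact Finset.sum_le_sum fun i _ => Finset.sum_mul_sq_le_sq_mul_sq _ _ _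

theorem mobiusMat_eq (s : ℝ) (P : Matrix (Fin d') (Fin d) ℝ) (x : EuclideanSpace ℝ (Fin d)) :
    mobiusMat s P x = (s * tanh (artanhLog (‖x‖ / s) / ‖x‖ * ‖mulVecE P x‖) /
      ‖mulVecE P x‖) • mulVecE P x := by
  rw [mobiusMat, div_mul_eq_mul_div, div_mul_eq_mul_div, mul_comm (artanhLog _)]

end Matrix

theorem stmt7_general {d : ℕ} (s Cx L : ℝ)
    (P Q : Matrix (Fin d) (Fin d) ℝ) (x : EuclideanSpace ℝ (Fin d))
    (hxC : ‖x‖ ≤ Cx) (hxs : ‖x‖ < s)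
    (hPx : mulVecE P x ≠ 0) (hQx : mulVecE Q x ≠ 0)
    (hPL : 1 / ‖mulVecE P x‖ ≤ L) (hQL : 1 / ‖mulVecE Q x‖ ≤ L) :
    ‖mobiusMat s P x - mobiusMat s Q x‖ ≤ 2 * s * L * Cx * frobNorm (P - Q) := by
  have hs : 0 < s := (norm_nonneg x).trans_lt hxs
  have hL : 0 ≤ L := (one_div_pos.2 (norm_pos_iff.2 hPx)).le.trans hPL
  have hc : 0 ≤ artanhLog (‖x‖ / s) / ‖x‖ :=
    div_nonneg (artanhLog_nonneg_s7 (by positivity) ((div_lt_one hs).2 hxs)) (norm_nonneg x)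
  rw [mobiusMat_eq, mobiusMat_eq]
  calc _ ≤ 2 * s * L * ‖mulVecE P x - mulVecE Q x‖ :=
        norm_tanh_smul_sub_tanh_smul_le hs.le hc hPx hQx hPL hQL
    _ ≤ 2 * s * L * (frobNorm (P - Q) * Cx) := by
        rw [← mulVecE_sub]
        gcongr
        exact (norm_mulVecE_le _ _).trans (by gcongr; exact Real.sqrt_nonneg _)
    _ = 2 * s * L * Cx * frobNorm (P - Q) := by ring

/-- Lipschitz-type bound: `‖P^{⊗_s} x − Q^{⊗_s} x‖ ≤ 2sL·C_x·‖P − Q‖_F`. -/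
theorem stmt7 {d : ℕ} (s Cx L : ℝ) (hs : 0 < s) (hCx : 0 < Cx) (hL : 0 < L)
    (P Q : Matrix (Fin d) (Fin d) ℝ) (x : EuclideanSpace ℝ (Fin d))
    (hx0 : 0 < ‖x‖) (hxC : ‖x‖ ≤ Cx) (hxs : ‖x‖ < s)
    (hPx : mulVecE P x ≠ 0) (hQx : mulVecE Q x ≠ 0)
    (hPL : 1 / ‖mulVecE P x‖ ≤ L) (hQL : 1 / ‖mulVecE Q x‖ ≤ L) :
    ‖mobiusMat s P x - mobiusMat s Q x‖ ≤ 2 * s * L * Cx * frobNorm (P - Q) :=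
  stmt7_general s Cx L P Q x hxC hxs hPx hQx hPL hQL
end
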